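/- arXiv:2402.15926 — 2 statements merged into one kernel-verified Lean document; each statement's English description precedes it below -/
import Mathlib

section
/- (Average risk bound in the EoS phase.) For GD with any stepsize η > 0 on separable logistic regression initialized at w₀ = 0, for every t ≥ 1: (1/t) Σ_{k=0}^{t−1} L(w_k) ≤ (1 + ln²(γ²ηt) + η²/4)/(γ²ηt), provided γ²ηt ≥ 1. -/
open Finset

noncomputable def logisticRisk {d n : ℕ} (x : Fin n → EuclideanSpace ℝ (Fin d))
    (w : EuclideanSpace ℝ (Fin d)) : ℝ :=
  (1 / n) * ∑ i, Real.log (1 + Real.exp (-(inner ℝ (x i) w : ℝ)))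

noncomputable def logisticGrad {d n : ℕ} (x : Fin n → EuclideanSpace ℝ (Fin d))
    (w : EuclideanSpace ℝ (Fin d)) : EuclideanSpace ℝ (Fin d) :=
  (n : ℝ)⁻¹ • ∑ i, (-(1 + Real.exp ((inner ℝ (x i) w : ℝ)))⁻¹) • x i

noncomputable def gradPotential {d n : ℕ} (x : Fin n → EuclideanSpace ℝ (Fin d))
    (w : EuclideanSpace ℝ (Fin d)) : ℝ :=
  (1 / n) * ∑ i, (1 + Real.exp ((inner ℝ (x i) w : ℝ)))⁻¹

noncomputable def expPotential {d n : ℕ} (x : Fin n → EuclideanSpace ℝ (Fin d))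
    (w : EuclideanSpace ℝ (Fin d)) : ℝ :=
  (1 / n) * ∑ i, Real.exp (-(inner ℝ (x i) w : ℝ))

lemma ptwise (s r : ℝ) :
    Real.log (1 + Real.exp (-s)) ≤ Real.exp (-r) + (r - s) / (1 + Real.exp s) := by
  have hE : (0:ℝ) < Real.exp s := Real.exp_pos s
  have hE1 : (0:ℝ) < 1 + Real.exp s := by linarith
  have hlog : Real.log (1 + Real.exp (-s)) = Real.log (1 + Real.exp s) - s := by
    have h1 : 1 + Real.exp (-s) = (1 + Real.exp s) / Real.exp s := by
      rw [Real.exp_neg]; field_simp; ring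
    rw [h1, Real.log_div (by positivity) (Real.exp_ne_zero s), Real.log_exp]
  set m := Real.log (1 + Real.exp (-s)) with hm
  have hm2 : m ≤ Real.exp (-s) := by
    have := Real.log_le_sub_one_of_pos (show (0:ℝ) < 1 + Real.exp (-s) by positivity)
    simp only [← hm] at this
    linarith
  have hmE : m * Real.exp s ≤ 1 := by
    have := mul_le_mul_of_nonneg_right hm2 hE.le
    rwa [← Real.exp_add, neg_add_cancel, Real.exp_zero] at this
  have htan : (1 + (Real.log (1 + Real.exp s) - r)) / (1 + Real.exp s) ≤ Real.exp (-r) := by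
    have h2 : Real.log (1 + Real.exp s) - r + 1 ≤ Real.exp (Real.log (1 + Real.exp s) - r) :=
      Real.add_one_le_exp _
    have h3 : Real.exp (Real.log (1 + Real.exp s) - r) = (1 + Real.exp s) * Real.exp (-r) := by
      rw [Real.exp_sub, Real.exp_log hE1, Real.exp_neg]; field_simp
    rw [div_le_iff₀ hE1]
    nlinarith [Real.exp_pos (-r)]
  have hk : m ≤ (1 + m) / (1 + Real.exp s) := by
    rw [le_div_iff₀ hE1]; nlinarith
  have heq : (1 + m) / (1 + Real.exp s)
      = (1 + (Real.log (1 + Real.exp s) - r)) / (1 + Real.exp s) + (r - s) / (1 + Real.exp s) := by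
    rw [hlog]; ring
  linarith [htan, hk, heq.le]

lemma grad_inner {d n : ℕ} (x : Fin n → EuclideanSpace ℝ (Fin d)) (w v : EuclideanSpace ℝ (Fin d)) :
    (inner ℝ (logisticGrad x w) v : ℝ)
      = (n : ℝ)⁻¹ * ∑ i, (-(1 + Real.exp ((inner ℝ (x i) w : ℝ)))⁻¹) * (inner ℝ (x i) v : ℝ) := by
  unfold logisticGrad
  rw [real_inner_smul_left, sum_inner]
  congr 1
  exact Finset.sum_congr rfl fun i _ => real_inner_smul_left _ _ _

lemma gradPot_nonneg {d n : ℕ} (x : Fin n → EuclideanSpace ℝ (Fin d)) (w : EuclideanSpace ℝ (Fin d)) :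
    0 ≤ gradPotential x w := by
  unfold gradPotential
  positivity

lemma gradPot_le_one {d n : ℕ} (x : Fin n → EuclideanSpace ℝ (Fin d)) (w : EuclideanSpace ℝ (Fin d)) :
    gradPotential x w ≤ 1 := by
  unfold gradPotential
  rcases Nat.eq_zero_or_pos n with h | h
  · subst h; simp
  have h1 : ∑ i, (1 + Real.exp ((inner ℝ (x i) w : ℝ)))⁻¹ ≤ (n : ℝ) := by
    calc ∑ i, (1 + Real.exp ((inner ℝ (x i) w : ℝ)))⁻¹ ≤ ∑ _i : Fin n, (1:ℝ) :=
          Finset.sum_le_sum fun i _ => by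
            rw [inv_le_one_iff₀]; right; nlinarith [Real.exp_pos ((inner ℝ (x i) w : ℝ))]
      _ = n := by simp
  have hn0 : (0:ℝ) < n := by exact_mod_cast h
  rw [one_div]
  calc (n:ℝ)⁻¹ * ∑ i, (1 + Real.exp ((inner ℝ (x i) w : ℝ)))⁻¹ ≤ (n:ℝ)⁻¹ * n := by
        apply mul_le_mul_of_nonneg_left h1 (by positivity)
    _ = 1 := by field_simp

lemma norm_grad_le {d n : ℕ} (x : Fin n → EuclideanSpace ℝ (Fin d)) (hx : ∀ i, ‖x i‖ ≤ 1)
    (w : EuclideanSpace ℝ (Fin d)) : ‖logisticGrad x w‖ ≤ gradPotential x w := by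
  unfold logisticGrad gradPotential
  rw [norm_smul, one_div]
  have h1 : ‖∑ i, (-(1 + Real.exp ((inner ℝ (x i) w : ℝ)))⁻¹) • x i‖
      ≤ ∑ i, (1 + Real.exp ((inner ℝ (x i) w : ℝ)))⁻¹ := by
    calc ‖∑ i, (-(1 + Real.exp ((inner ℝ (x i) w : ℝ)))⁻¹) • x i‖
        ≤ ∑ i, ‖(-(1 + Real.exp ((inner ℝ (x i) w : ℝ)))⁻¹) • x i‖ := norm_sum_le _ _
      _ ≤ ∑ i, (1 + Real.exp ((inner ℝ (x i) w : ℝ)))⁻¹ := by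
          apply Finset.sum_le_sum
          intro i _
          rw [norm_smul, Real.norm_eq_abs, abs_neg,
            abs_of_pos (by positivity : (0:ℝ) < (1 + Real.exp ((inner ℝ (x i) w : ℝ)))⁻¹)]
          nlinarith [hx i, norm_nonneg (x i),
            (by positivity : (0:ℝ) < (1 + Real.exp ((inner ℝ (x i) w : ℝ)))⁻¹)]
  have h2 : ‖(n:ℝ)⁻¹‖ = (n:ℝ)⁻¹ := by
    rw [Real.norm_eq_abs, abs_of_nonneg (by positivity)]
  rw [h2]
  exact mul_le_mul_of_nonneg_left h1 (by positivity)

lemma grad_inner_wstar {d n : ℕ} (x : Fin n → EuclideanSpace ℝ (Fin d))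
    (γ : ℝ) (hγ : 0 < γ) (wstar : EuclideanSpace ℝ (Fin d))
    (hmargin : ∀ i, γ ≤ (inner ℝ (x i) wstar : ℝ)) (w : EuclideanSpace ℝ (Fin d)) :
    (inner ℝ (logisticGrad x w) wstar : ℝ) ≤ -(γ * gradPotential x w) := by
  rw [grad_inner]
  unfold gradPotential
  have h1 : ∑ i, (-(1 + Real.exp ((inner ℝ (x i) w : ℝ)))⁻¹) * (inner ℝ (x i) wstar : ℝ)
      ≤ ∑ i, (-(γ * (1 + Real.exp ((inner ℝ (x i) w : ℝ)))⁻¹)) := by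
    apply Finset.sum_le_sum
    intro i _
    have hc : (0:ℝ) < (1 + Real.exp ((inner ℝ (x i) w : ℝ)))⁻¹ := by positivity
    nlinarith [hmargin i]
  have h2 : ∑ i, (-(γ * (1 + Real.exp ((inner ℝ (x i) w : ℝ)))⁻¹))
      = -(γ * ∑ i, (1 + Real.exp ((inner ℝ (x i) w : ℝ)))⁻¹) := by
    rw [Finset.sum_neg_distrib, ← Finset.mul_sum]
  calc (n:ℝ)⁻¹ * ∑ i, (-(1 + Real.exp ((inner ℝ (x i) w : ℝ)))⁻¹) * (inner ℝ (x i) wstar : ℝ)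
      ≤ (n:ℝ)⁻¹ * ∑ i, (-(γ * (1 + Real.exp ((inner ℝ (x i) w : ℝ)))⁻¹)) :=
        mul_le_mul_of_nonneg_left h1 (by positivity)
    _ = -(γ * ((1/n) * ∑ i, (1 + Real.exp ((inner ℝ (x i) w : ℝ)))⁻¹)) := by
        rw [h2, one_div]; ring

lemma convexity_bound {d n : ℕ} (x : Fin n → EuclideanSpace ℝ (Fin d))
    (w u : EuclideanSpace ℝ (Fin d)) :
    logisticRisk x w - expPotential x u ≤ (inner ℝ (logisticGrad x w) (w - u) : ℝ) := by
  rw [grad_inner]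
  unfold logisticRisk expPotential
  rw [one_div, ← mul_sub, ← Finset.sum_sub_distrib]
  apply mul_le_mul_of_nonneg_left _ (by positivity)
  apply Finset.sum_le_sum
  intro i _
  have hiu : (inner ℝ (x i) (w - u) : ℝ) = (inner ℝ (x i) w : ℝ) - (inner ℝ (x i) u : ℝ) :=
    inner_sub_right _ _ _
  rw [hiu]
  have hs := ptwise ((inner ℝ (x i) w : ℝ)) ((inner ℝ (x i) u : ℝ))
  have hE1 : (0:ℝ) < 1 + Real.exp ((inner ℝ (x i) w : ℝ)) := by positivity
  have heq : ((inner ℝ (x i) u : ℝ) - (inner ℝ (x i) w : ℝ)) / (1 + Real.exp ((inner ℝ (x i) w : ℝ)))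
      = -(1 + Real.exp ((inner ℝ (x i) w : ℝ)))⁻¹ * ((inner ℝ (x i) w : ℝ) - (inner ℝ (x i) u : ℝ)) := by
    field_simp; ring
  linarith [heq.le, heq.ge]

lemma sq_trick (X A b η : ℝ) (h : 2*X ≤ 2*(b*A) - A^2 + 2 + η*A) :
    X ≤ 1 + b^2 + η^2/4 := by
  nlinarith [sq_nonneg (A - b - η/2), sq_nonneg (b - η/2)]

/-- average risk bound in the EoS phase. -/
theorem gd_eos_average_risk_bound {d n : ℕ} (hn : 0 < n)
    (x : Fin n → EuclideanSpace ℝ (Fin d)) (hx : ∀ i, ‖x i‖ ≤ 1)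
    (γ : ℝ) (hγ : 0 < γ) (wstar : EuclideanSpace ℝ (Fin d)) (hws : ‖wstar‖ = 1)
    (hmargin : ∀ i, γ ≤ (inner ℝ (x i) wstar : ℝ))
    (η : ℝ) (hη : 0 < η) (w : ℕ → EuclideanSpace ℝ (Fin d))
    (hw0 : w 0 = 0)
    (hgd : ∀ t, w (t + 1) = w t - η • logisticGrad x (w t))
    (t : ℕ) (ht : 1 ≤ t) (hlarge : 1 ≤ γ ^ 2 * η * t) :
    (1 / t) * ∑ k ∈ Finset.range t, logisticRisk x (w k)
      ≤ (1 + (Real.log (γ ^ 2 * η * t)) ^ 2 + η ^ 2 / 4) / (γ ^ 2 * η * t) := by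
  have ht0 : (0:ℝ) < t := by exact_mod_cast ht
  set S : ℝ := γ ^ 2 * η * t with hSdef
  clear_value S
  have hS0 : (0:ℝ) < S := lt_of_lt_of_le one_pos hlarge
  have hb0 : 0 ≤ Real.log S := Real.log_nonneg hlarge
  set b : ℝ := Real.log S with hbdef
  clear_value b
  set ρ : ℝ := b / γ with hρdef
  clear_value ρ
  have hρ0 : 0 ≤ ρ := by rw [hρdef]; exact div_nonneg hb0 hγ.le
  have hργ : ρ * γ = b := by rw [hρdef]; exact div_mul_cancel₀ _ hγ.ne'
  set u : EuclideanSpace ℝ (Fin d) := ρ • wstar with hudef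
  clear_value u
  -- F(u) ≤ 1/S
  have hFu : expPotential x u ≤ 1 / S := by
    unfold expPotential
    have hterm : ∀ i : Fin n, Real.exp (-(inner ℝ (x i) u : ℝ)) ≤ 1 / S := by
      intro i
      have h1 : (inner ℝ (x i) u : ℝ) = ρ * (inner ℝ (x i) wstar : ℝ) := by
        rw [hudef]; exact real_inner_smul_right _ _ _
      have h2 : b ≤ (inner ℝ (x i) u : ℝ) := by
        rw [h1, ← hργ]
        have := mul_le_mul_of_nonneg_left (hmargin i) hρ0
        linarith
      calc Real.exp (-(inner ℝ (x i) u : ℝ)) ≤ Real.exp (-b) := by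
            apply Real.exp_le_exp.mpr; linarith
        _ = 1 / S := by
            rw [hbdef, Real.exp_neg, Real.exp_log hS0, one_div]
    have hsum : ∑ i, Real.exp (-(inner ℝ (x i) u : ℝ)) ≤ (n : ℝ) * (1 / S) := by
      calc ∑ i, Real.exp (-(inner ℝ (x i) u : ℝ)) ≤ ∑ _i : Fin n, (1/S) :=
            Finset.sum_le_sum fun i _ => hterm i
        _ = (n : ℝ) * (1/S) := by simp [mul_comm]
    have hn0 : (0:ℝ) < n := by exact_mod_cast hn
    calc (1/(n:ℝ)) * ∑ i, Real.exp (-(inner ℝ (x i) u : ℝ)) ≤ (1/(n:ℝ)) * ((n:ℝ) * (1/S)) :=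
          mul_le_mul_of_nonneg_left hsum (by positivity)
      _ = 1 / S := by field_simp
  -- margin accumulation
  have hA : ∀ m : ℕ, γ * η * ∑ k ∈ Finset.range m, gradPotential x (w k)
      ≤ (inner ℝ (w m) wstar : ℝ) := by
    intro m
    induction m with
    | zero => simp [hw0]
    | succ m ih =>
      rw [Finset.sum_range_succ, hgd m]
      have h1 : (inner ℝ (w m - η • logisticGrad x (w m)) wstar : ℝ)
          = (inner ℝ (w m) wstar : ℝ) - η * (inner ℝ (logisticGrad x (w m)) wstar : ℝ) := by
        rw [inner_sub_left, real_inner_smul_left]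
      rw [h1]
      have h2 := grad_inner_wstar x γ hγ wstar hmargin (w m)
      have h3 := mul_le_mul_of_nonneg_left h2 hη.le
      nlinarith
  -- descent with comparator
  have step : ∀ k : ℕ, ‖w (k+1) - u‖^2 ≤ ‖w k - u‖^2
      - 2*η*(logisticRisk x (w k) - expPotential x u) + η^2 * gradPotential x (w k) := by
    intro k
    have hrec : w (k+1) - u = (w k - u) - η • logisticGrad x (w k) := by
      rw [hgd k]; abel
    rw [hrec, norm_sub_sq_real]
    have hip : (inner ℝ (w k - u) (η • logisticGrad x (w k)) : ℝ)
        = η * (inner ℝ (logisticGrad x (w k)) (w k - u) : ℝ) := by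
      rw [real_inner_smul_right, real_inner_comm]
    have hns : ‖η • logisticGrad x (w k)‖^2 ≤ η^2 * gradPotential x (w k) := by
      rw [norm_smul, mul_pow, Real.norm_eq_abs, sq_abs]
      have h1 := norm_grad_le x hx (w k)
      have h2 := gradPot_le_one x (w k)
      have h3 := gradPot_nonneg x (w k)
      have h4 := norm_nonneg (logisticGrad x (w k))
      have hg2 : ‖logisticGrad x (w k)‖^2 ≤ gradPotential x (w k) := by nlinarith
      exact mul_le_mul_of_nonneg_left hg2 (sq_nonneg η)
    have hcb := convexity_bound x (w k) u
    have h5 := mul_le_mul_of_nonneg_left hcb hη.le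
    rw [hip]
    linarith
  have hkey : ∀ m : ℕ, ‖w m - u‖^2 + 2*η*(∑ k ∈ Finset.range m, logisticRisk x (w k))
      ≤ ‖u‖^2 + 2*η*(m:ℝ)*expPotential x u
        + η^2 * ∑ k ∈ Finset.range m, gradPotential x (w k) := by
    intro m
    induction m with
    | zero => simp [hw0]
    | succ m ih =>
      rw [Finset.sum_range_succ, Finset.sum_range_succ]
      have := step m
      push_cast
      linarith
  -- assemble
  set Fp : ℝ := expPotential x u with hFdef
  clear_value Fp
  set a : ℝ := (inner ℝ (w t) wstar : ℝ) with hadef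
  clear_value a
  set Gs : ℝ := ∑ k ∈ Finset.range t, gradPotential x (w k) with hGdef
  clear_value Gs
  set L : ℝ := ∑ k ∈ Finset.range t, logisticRisk x (w k) with hLdef
  clear_value L
  have hGs0 : 0 ≤ Gs := by
    rw [hGdef]; exact Finset.sum_nonneg fun k _ => gradPot_nonneg x (w k)
  have hAt : γ * η * Gs ≤ a := by rw [hGdef, hadef]; exact hA t
  have ha0 : 0 ≤ a := le_trans (by positivity) hAt
  have hCS : a ≤ ‖w t‖ := by
    rw [hadef]
    calc (inner ℝ (w t) wstar : ℝ) ≤ ‖w t‖ * ‖wstar‖ := real_inner_le_norm _ _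
      _ = ‖w t‖ := by rw [hws, mul_one]
  have ha2 : a^2 ≤ ‖w t‖^2 := by nlinarith [norm_nonneg (w t)]
  have hu2 : ‖u‖^2 = ρ^2 := by
    rw [hudef, norm_smul, hws, mul_one, Real.norm_eq_abs, sq_abs]
  have hwtu : ‖w t - u‖^2 = ‖w t‖^2 - 2*(ρ*a) + ρ^2 := by
    rw [norm_sub_sq_real, hu2]
    have h6 : (inner ℝ (w t) u : ℝ) = ρ * a := by
      rw [hudef, hadef]; exact real_inner_smul_right _ _ _
    rw [h6]
  have hmaster : 2*η*L ≤ 2*(ρ*a) - a^2 + 2*η*(t:ℝ)*Fp + η^2 * Gs := by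
    have := hkey t
    rw [hwtu, hu2, ← hLdef, ← hGdef] at this
    linarith
  have hF2 : 2*η*(t:ℝ)*Fp ≤ 2/γ^2 := by
    have h1 : 2*η*(t:ℝ)*Fp ≤ 2*η*(t:ℝ)*(1/S) :=
      mul_le_mul_of_nonneg_left hFu (by positivity)
    have h2 : 2*η*(t:ℝ)*(1/S) = 2/γ^2 := by
      rw [hSdef]; field_simp
    linarith
  -- multiply by γ² and complete the square
  have hF2' : γ^2 * (2*η*(t:ℝ)*Fp) ≤ 2 := by
    have h1 : γ^2 * (2*η*(t:ℝ)*Fp) ≤ γ^2 * (2*η*(t:ℝ)*(1/S)) := by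
      apply mul_le_mul_of_nonneg_left _ (by positivity)
      exact mul_le_mul_of_nonneg_left hFu (by positivity)
    have h2 : γ^2 * (2*η*(t:ℝ)*(1/S)) = 2 := by
      rw [hSdef]; field_simp
    linarith
  have hfinal : η * γ^2 * L ≤ 1 + b^2 + η^2/4 := by
    have hm3 : γ^2*(2*η*L) ≤ γ^2*(2*(ρ*a)) - γ^2*a^2
        + γ^2*(2*η*(t:ℝ)*Fp) + γ^2*(η^2*Gs) := by
      linarith [mul_le_mul_of_nonneg_left hmaster (by positivity : (0:ℝ) ≤ γ^2)]
    have hAt2 : γ^2 * (η^2 * Gs) ≤ γ * η * a := by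
      linarith [mul_le_mul_of_nonneg_left hAt (by positivity : (0:ℝ) ≤ γ * η)]
    have hρa : γ^2 * (2*(ρ * a)) = 2 * (b * (γ * a)) := by
      rw [← hργ]; ring
    apply sq_trick (η * γ^2 * L) (γ * a) b η
    linarith [hm3, hAt2, hF2', hρa]
  have hgoal : L * S ≤ (1 + b^2 + η^2/4) * t := by
    have := mul_le_mul_of_nonneg_right hfinal ht0.le
    rw [hSdef]
    linarith
  rw [one_div, inv_mul_eq_div, div_le_div_iff₀ ht0 hS0]
  exact hgoal
end

section
/- (Parameter norm bound under large stepsize GD.) For GD on separable logistic regression with w₀ = 0 and any η > 0, for every t ≥ 1 with γ²ηt ≥ 1: ‖w_t‖ ≤ (√2 + 2 ln(γ²ηt) + η)/γ. -/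
open Finset

/-- Tangent line inequality for the softplus function. -/
lemma softplus_tangent (a b : ℝ) :
    Real.log (1 + Real.exp a) + Real.exp a / (1 + Real.exp a) * (b - a)
      ≤ Real.log (1 + Real.exp b) := by
  have ha : (0:ℝ) < 1 + Real.exp a := by positivity
  have hb : (0:ℝ) < 1 + Real.exp b := by positivity
  set p : ℝ := Real.exp a / (1 + Real.exp a) with hp
  have hp0 : 0 ≤ p := by positivity
  have hp1 : 1 - p = 1 / (1 + Real.exp a) := by
    rw [hp]; field_simp; ring
  have hp1' : 0 ≤ 1 - p := by rw [hp1]; positivity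
  have hconv := convexOn_exp.2 (Set.mem_univ a) (Set.mem_univ b) hp1' hp0 (by ring)
  simp only [smul_eq_mul] at hconv
  have hrhs : (1 - p) * Real.exp a + p * Real.exp b
      = Real.exp a * (1 + Real.exp b) / (1 + Real.exp a) := by
    rw [hp1, hp]; field_simp
  rw [hrhs] at hconv
  have hlog := Real.log_le_log (Real.exp_pos _) hconv
  rw [Real.log_exp, Real.log_div (by positivity) (ne_of_gt ha),
    Real.log_mul (Real.exp_ne_zero a) (ne_of_gt hb), Real.log_exp] at hlog
  have : (1 - p) * a + p * b = a + p * (b - a) := by ring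
  rw [this] at hlog
  linarith

/-- Tangent line inequality for the logistic loss. -/
lemma logistic_tangent (a b : ℝ) :
    Real.log (1 + Real.exp (-a)) + (-(1 + Real.exp a)⁻¹) * (b - a)
      ≤ Real.log (1 + Real.exp (-b)) := by
  have hid : ∀ s : ℝ, Real.log (1 + Real.exp (-s)) = Real.log (1 + Real.exp s) - s := by
    intro s
    rw [eq_sub_iff_add_eq, ← Real.log_exp s,
      ← Real.log_mul (by positivity) (Real.exp_ne_zero s), Real.log_exp]
    congr 1
    rw [Real.exp_neg]
    have : Real.exp s ≠ 0 := Real.exp_ne_zero s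
    field_simp
    ring
  have ht := softplus_tangent a b
  have hpa : Real.exp a / (1 + Real.exp a) = 1 - (1 + Real.exp a)⁻¹ := by
    have h : (0:ℝ) < 1 + Real.exp a := by positivity
    field_simp
    ring
  rw [hpa] at ht
  rw [hid a, hid b]
  linarith

/-- Expansion of inner products with the logistic gradient. -/
lemma logisticGrad_inner {d n : ℕ} (x : Fin n → EuclideanSpace ℝ (Fin d))
    (w v : EuclideanSpace ℝ (Fin d)) :
    (inner ℝ (logisticGrad x w) v : ℝ)
      = (n:ℝ)⁻¹ * ∑ i, (-(1 + Real.exp ((inner ℝ (x i) w : ℝ)))⁻¹) * (inner ℝ (x i) v : ℝ) := by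
  rw [logisticGrad, real_inner_smul_left, sum_inner]
  congr 1
  exact Finset.sum_congr rfl fun i _ => real_inner_smul_left _ _ _

set_option maxHeartbeats 2000000 in
/-- parameter norm bound under large stepsize GD. -/
theorem gd_parameter_norm_bound {d n : ℕ} (hn : 0 < n)
    (x : Fin n → EuclideanSpace ℝ (Fin d)) (hx : ∀ i, ‖x i‖ ≤ 1)
    (γ : ℝ) (hγ : 0 < γ) (wstar : EuclideanSpace ℝ (Fin d)) (hws : ‖wstar‖ = 1)
    (hmargin : ∀ i, γ ≤ (inner ℝ (x i) wstar : ℝ))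
    (η : ℝ) (hη : 0 < η) (w : ℕ → EuclideanSpace ℝ (Fin d))
    (hw0 : w 0 = 0)
    (hgd : ∀ t, w (t + 1) = w t - η • logisticGrad x (w t))
    (t : ℕ) (ht : 1 ≤ t) (hlarge : 1 ≤ γ ^ 2 * η * t) :
    ‖w t‖ ≤ (Real.sqrt 2 + 2 * Real.log (γ ^ 2 * η * t) + η) / γ := by
  have hn' : (0:ℝ) < n := by exact_mod_cast hn
  set ρ : ℝ := Real.log (γ ^ 2 * η * t) with hρdef
  have hρ : 0 ≤ ρ := Real.log_nonneg hlarge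
  set u : EuclideanSpace ℝ (Fin d) := (ρ / γ) • wstar with hu
  -- basic facts
  have hLnonneg : ∀ v : EuclideanSpace ℝ (Fin d), 0 ≤ logisticRisk x v := by
    intro v
    unfold logisticRisk
    apply mul_nonneg (by positivity)
    apply Finset.sum_nonneg
    intro i _
    apply Real.log_nonneg
    nlinarith [Real.exp_pos (-(inner ℝ (x i) v : ℝ))]
  have hGnonneg : ∀ v : EuclideanSpace ℝ (Fin d), 0 ≤ gradPotential x v := by
    intro v
    unfold gradPotential
    apply mul_nonneg (by positivity)
    apply Finset.sum_nonneg
    intro i _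
    positivity
  have hGle1 : ∀ v : EuclideanSpace ℝ (Fin d), gradPotential x v ≤ 1 := by
    intro v
    unfold gradPotential
    have h : ∑ i : Fin n, (1 + Real.exp ((inner ℝ (x i) v : ℝ)))⁻¹ ≤ ∑ i : Fin n, (1:ℝ) := by
      apply Finset.sum_le_sum
      intro i _
      rw [inv_le_one_iff₀]
      right
      nlinarith [Real.exp_pos ((inner ℝ (x i) v : ℝ))]
    calc (1/(n:ℝ)) * ∑ i : Fin n, (1 + Real.exp ((inner ℝ (x i) v : ℝ)))⁻¹
        ≤ (1/(n:ℝ)) * ∑ i : Fin n, (1:ℝ) := by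
          apply mul_le_mul_of_nonneg_left h (by positivity)
      _ = 1 := by
          rw [Finset.sum_const, Finset.card_univ, Fintype.card_fin, nsmul_eq_mul, mul_one]
          field_simp
  have hGnorm : ∀ v : EuclideanSpace ℝ (Fin d), ‖logisticGrad x v‖ ≤ gradPotential x v := by
    intro v
    unfold logisticGrad gradPotential
    rw [norm_smul, Real.norm_eq_abs, abs_of_nonneg (by positivity : (0:ℝ) ≤ (n:ℝ)⁻¹), one_div]
    apply mul_le_mul_of_nonneg_left _ (by positivity)
    calc ‖∑ i : Fin n, (-(1 + Real.exp ((inner ℝ (x i) v : ℝ)))⁻¹) • x i‖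
        ≤ ∑ i : Fin n, ‖(-(1 + Real.exp ((inner ℝ (x i) v : ℝ)))⁻¹) • x i‖ :=
          norm_sum_le _ _
      _ ≤ ∑ i : Fin n, (1 + Real.exp ((inner ℝ (x i) v : ℝ)))⁻¹ := by
          apply Finset.sum_le_sum
          intro i _
          rw [norm_smul, Real.norm_eq_abs, abs_neg, abs_of_nonneg (by positivity)]
          exact mul_le_of_le_one_right (by positivity) (hx i)
  have hGstar : ∀ v : EuclideanSpace ℝ (Fin d),
      (inner ℝ (logisticGrad x v) wstar : ℝ) ≤ -(γ * gradPotential x v) := by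
    intro v
    rw [logisticGrad_inner]
    unfold gradPotential
    rw [one_div]
    have h : ∑ i : Fin n, (-(1 + Real.exp ((inner ℝ (x i) v : ℝ)))⁻¹) * (inner ℝ (x i) wstar : ℝ)
        ≤ ∑ i : Fin n, (-(γ * (1 + Real.exp ((inner ℝ (x i) v : ℝ)))⁻¹)) := by
      apply Finset.sum_le_sum
      intro i _
      have hc : (0:ℝ) < (1 + Real.exp ((inner ℝ (x i) v : ℝ)))⁻¹ := by positivity
      nlinarith [hmargin i]
    calc (n:ℝ)⁻¹ * ∑ i : Fin n, (-(1 + Real.exp ((inner ℝ (x i) v : ℝ)))⁻¹) * (inner ℝ (x i) wstar : ℝ)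
        ≤ (n:ℝ)⁻¹ * ∑ i : Fin n, (-(γ * (1 + Real.exp ((inner ℝ (x i) v : ℝ)))⁻¹)) := by
          apply mul_le_mul_of_nonneg_left h (by positivity)
      _ = -(γ * ((n:ℝ)⁻¹ * ∑ i : Fin n, (1 + Real.exp ((inner ℝ (x i) v : ℝ)))⁻¹)) := by
          rw [Finset.sum_neg_distrib, ← Finset.mul_sum]
          ring
  have hconv : ∀ v : EuclideanSpace ℝ (Fin d),
      -(logisticRisk x u) ≤ (inner ℝ (logisticGrad x v) (v - u) : ℝ) := by
    intro v
    rw [logisticGrad_inner]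
    unfold logisticRisk
    have hsum : ∑ i : Fin n, Real.log (1 + Real.exp (-(inner ℝ (x i) v : ℝ)))
        - ∑ i : Fin n, Real.log (1 + Real.exp (-(inner ℝ (x i) u : ℝ)))
        ≤ ∑ i : Fin n, (-(1 + Real.exp ((inner ℝ (x i) v : ℝ)))⁻¹) * (inner ℝ (x i) (v - u) : ℝ) := by
      rw [← Finset.sum_sub_distrib]
      apply Finset.sum_le_sum
      intro i _
      have := logistic_tangent ((inner ℝ (x i) v : ℝ)) ((inner ℝ (x i) u : ℝ))
      have hir : (inner ℝ (x i) (v - u) : ℝ) = (inner ℝ (x i) v : ℝ) - (inner ℝ (x i) u : ℝ) :=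
        inner_sub_right _ _ _
      rw [hir]
      nlinarith [this]
    have hL : (1/(n:ℝ)) * (∑ i : Fin n, Real.log (1 + Real.exp (-(inner ℝ (x i) v : ℝ)))
        - ∑ i : Fin n, Real.log (1 + Real.exp (-(inner ℝ (x i) u : ℝ))))
        ≤ (n:ℝ)⁻¹ * ∑ i : Fin n, (-(1 + Real.exp ((inner ℝ (x i) v : ℝ)))⁻¹) * (inner ℝ (x i) (v - u) : ℝ) := by
      rw [one_div]
      apply mul_le_mul_of_nonneg_left hsum (by positivity)
    have hnonneg := hLnonneg v
    unfold logisticRisk at hnonneg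
    nlinarith [hL]
  -- bound on the comparator risk
  have hLu : logisticRisk x u ≤ Real.exp (-ρ) := by
    have hterm : ∀ i : Fin n, Real.log (1 + Real.exp (-(inner ℝ (x i) u : ℝ))) ≤ Real.exp (-ρ) := by
      intro i
      have hiu : (inner ℝ (x i) u : ℝ) = (ρ / γ) * (inner ℝ (x i) wstar : ℝ) :=
        real_inner_smul_right _ _ _
      have hge : ρ ≤ (inner ℝ (x i) u : ℝ) := by
        rw [hiu]
        have h1 : (ρ/γ) * γ ≤ (ρ/γ) * (inner ℝ (x i) wstar : ℝ) :=
          mul_le_mul_of_nonneg_left (hmargin i) (by positivity)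
        have h2 : (ρ/γ) * γ = ρ := by field_simp
        linarith
      have h3 : Real.exp (-(inner ℝ (x i) u : ℝ)) ≤ Real.exp (-ρ) := by
        apply Real.exp_le_exp.2
        linarith
      have h4 := Real.log_le_sub_one_of_pos
        (by positivity : (0:ℝ) < 1 + Real.exp (-(inner ℝ (x i) u : ℝ)))
      linarith
    unfold logisticRisk
    calc (1/(n:ℝ)) * ∑ i : Fin n, Real.log (1 + Real.exp (-(inner ℝ (x i) u : ℝ)))
        ≤ (1/(n:ℝ)) * ∑ i : Fin n, Real.exp (-ρ) := by
          apply mul_le_mul_of_nonneg_left (Finset.sum_le_sum fun i _ => hterm i) (by positivity)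
      _ = Real.exp (-ρ) := by
          rw [Finset.sum_const, Finset.card_univ, Fintype.card_fin, nsmul_eq_mul]
          field_simp
  -- main induction
  have hQ : ∀ s : ℕ, γ * ‖w s - u‖ ^ 2 ≤ γ * ‖u‖ ^ 2 + 2 * η * s * (γ * logisticRisk x u)
      + η * (inner ℝ (w s) wstar : ℝ) := by
    intro s
    induction s with
    | zero => simp [hw0]
    | succ s ih =>
      have hgdstep := hgd s
      set g := logisticGrad x (w s) with hg
      have h1 : w (s + 1) - u = (w s - u) - η • g := by rw [hgdstep]; abel
      have h2 : ‖w (s + 1) - u‖ ^ 2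
          = ‖w s - u‖ ^ 2 - 2 * (η * (inner ℝ (w s - u) g : ℝ)) + η ^ 2 * ‖g‖ ^ 2 := by
        rw [h1, norm_sub_sq_real, real_inner_smul_right, norm_smul, Real.norm_eq_abs,
          abs_of_pos hη, mul_pow]
      have h3 : (inner ℝ (w (s + 1)) wstar : ℝ)
          = (inner ℝ (w s) wstar : ℝ) - η * (inner ℝ g wstar : ℝ) := by
        rw [hgdstep, inner_sub_left, real_inner_smul_left]
      have h4 : -(logisticRisk x u) ≤ (inner ℝ (w s - u) g : ℝ) := by
        rw [real_inner_comm]; exact hconv (w s)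
      have h4' := mul_le_mul_of_nonneg_left h4 (mul_nonneg hγ.le hη.le)
      have hA : η ^ 2 * ‖g‖ ^ 2 ≤ η ^ 2 * gradPotential x (w s) := by
        have ha1 : ‖g‖ ^ 2 ≤ gradPotential x (w s) ^ 2 :=
          pow_le_pow_left₀ (norm_nonneg g) (hGnorm (w s)) 2
        have ha2 : gradPotential x (w s) ^ 2 ≤ gradPotential x (w s) := by
          nlinarith [hGle1 (w s), hGnonneg (w s)]
        exact mul_le_mul_of_nonneg_left (ha1.trans ha2) (sq_nonneg η)
      have hst' : γ * gradPotential x (w s) ≤ -(inner ℝ g wstar : ℝ) := by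
        have := hGstar (w s)
        linarith
      have h5 : γ * (η ^ 2 * ‖g‖ ^ 2) ≤ η ^ 2 * (-(inner ℝ g wstar : ℝ)) := by
        have hb1 := mul_le_mul_of_nonneg_left hA hγ.le
        have hb2 := mul_le_mul_of_nonneg_left hst' (sq_nonneg η)
        nlinarith [hb1, hb2]
      rw [h2, h3]
      push_cast
      ring_nf
      ring_nf at ih h4' h5
      linarith [ih, h4', h5]
  -- conclude
  have hQt := hQ t
  have hexp : ‖w t - u‖ ^ 2 = ‖w t‖ ^ 2 - 2 * (inner ℝ (w t) u : ℝ) + ‖u‖ ^ 2 :=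
    norm_sub_sq_real _ _
  have hwu : γ * (inner ℝ (w t) u : ℝ) = ρ * (inner ℝ (w t) wstar : ℝ) := by
    rw [hu, real_inner_smul_right]
    field_simp
  have hcs : (inner ℝ (w t) wstar : ℝ) ≤ ‖w t‖ := by
    have h := real_inner_le_norm (w t) wstar
    rw [hws, mul_one] at h
    exact h
  have htpos : (0:ℝ) < t := by exact_mod_cast ht
  have h2ηt : 2 * η * t * (γ * logisticRisk x u) ≤ 2 / γ := by
    have h1 : Real.exp (-ρ) = (γ ^ 2 * η * t)⁻¹ := by
      rw [Real.exp_neg, hρdef, Real.exp_log (lt_of_lt_of_le one_pos hlarge)]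
    have h2 : 2 * η * (t:ℝ) * (γ * logisticRisk x u)
        ≤ 2 * η * (t:ℝ) * (γ * (γ ^ 2 * η * t)⁻¹) := by
      apply mul_le_mul_of_nonneg_left _ (by positivity)
      rw [← h1]
      exact mul_le_mul_of_nonneg_left hLu hγ.le
    have h3 : 2 * η * (t:ℝ) * (γ * (γ ^ 2 * η * (t:ℝ))⁻¹) = 2 / γ := by
      field_simp
    linarith
  have key : γ * ‖w t‖ ^ 2 ≤ (2 * ρ + η) * ‖w t‖ + 2 / γ := by
    rw [hexp] at hQt
    have hc : (0:ℝ) ≤ 2 * ρ + η := by positivity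
    have hcs' := mul_le_mul_of_nonneg_left hcs hc
    ring_nf
    ring_nf at hQt hwu hcs' h2ηt
    linarith [hQt, hwu, hcs', h2ηt]
  have hs2 : Real.sqrt 2 ^ 2 = 2 := Real.sq_sqrt (by norm_num)
  have hs0 : (0:ℝ) ≤ Real.sqrt 2 := Real.sqrt_nonneg 2
  have key2 : (‖w t‖ * γ) ^ 2 ≤ (2 * ρ + η) * (‖w t‖ * γ) + 2 := by
    have hk := mul_le_mul_of_nonneg_left key hγ.le
    have e1 : γ * ((2 * ρ + η) * ‖w t‖ + 2 / γ) = (2 * ρ + η) * (‖w t‖ * γ) + 2 := by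
      field_simp
    have e2 : γ * (γ * ‖w t‖ ^ 2) = (‖w t‖ * γ) ^ 2 := by ring
    linarith [hk, e1, e2]
  rw [le_div_iff₀ hγ]
  by_contra hcon
  push_neg at hcon
  have hY : 0 < ‖w t‖ * γ := lt_of_le_of_lt (by positivity) hcon
  have hmul := mul_lt_mul_of_pos_right hcon hY
  have hmul2 := mul_le_mul_of_nonneg_left hcon.le hs0
  have hnn : (0:ℝ) ≤ Real.sqrt 2 * (2 * ρ + η) :=
    mul_nonneg hs0 (by positivity)
  nlinarith [key2, hmul, hmul2, hs2, hρ, hη.le, hnn]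
end
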